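/- arXiv:2311.17388 — 2 statements merged into one kernel-verified Lean document; each statement's English description precedes it below -/
import Mathlib

section
/- If U is a unitary on H_anc ⊗ H_sys with (⟨0|⊗I) U (|0⟩⊗I) = H/α for a Hermitian operator H and α > 0, and ‖H‖ ≤ α, then the operator 2(H/α)² − I equals (⟨0|⊗I) U† (R₀ ⊗ I) U (|0⟩⊗I), where R₀ = 2|0⟩⟨0| − I is the reflection about the ancilla zero state. In other words, U† (R₀⊗I) U is a (1, b, 0)-block-encoding of the second Chebyshev polynomial 2(H/α)² − I. -/
open scoped InnerProductSpace

/-- Injection |0⟩⊗I : the map v ↦ |z⟩⊗v on a product index space. -/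
noncomputable def injAt {α σ : Type*} [Fintype α] [DecidableEq α] [Fintype σ] (z : α) :
    EuclideanSpace ℂ σ →L[ℂ] EuclideanSpace ℂ (α × σ) :=
  LinearMap.toContinuousLinearMap
  { toFun := fun v => WithLp.toLp 2 (fun (p : α × σ) => if p.1 = z then v p.2 else 0)
    map_add' := by intro u v; ext p; by_cases h : p.1 = z <;> simp [h]
    map_smul' := by intro c v; ext p; by_cases h : p.1 = z <;> simp [h] }

/-- Projection ⟨z|⊗I : the map w ↦ (⟨z|⊗I) w. -/
noncomputable def prjAt {α σ : Type*} [Fintype α] [DecidableEq α] [Fintype σ] (z : α) :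
    EuclideanSpace ℂ (α × σ) →L[ℂ] EuclideanSpace ℂ σ :=
  LinearMap.toContinuousLinearMap
  { toFun := fun w => WithLp.toLp 2 (fun j => w (z, j))
    map_add' := by intro u v; ext j; simp
    map_smul' := by intro c v; ext j; simp }

/-- The top-left block (⟨z|⊗I) U (|z⟩⊗I) of an operator on the product space. -/
noncomputable def blockAt {α σ : Type*} [Fintype α] [DecidableEq α] [Fintype σ] (z : α)
    (U : EuclideanSpace ℂ (α × σ) →L[ℂ] EuclideanSpace ℂ (α × σ)) :
    EuclideanSpace ℂ σ →L[ℂ] EuclideanSpace ℂ σ :=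
  prjAt z ∘L U ∘L injAt z

/-! Expanding `R₀ = 2|0⟩⟨0| - I` gives `U† (R₀ ⊗ I) U = 2 U† (|0⟩⟨0| ⊗ I) U - U† U`. The identity
term collapses to `I` because `U` is unitary, and the `0`-block of the projector term factors as
`A† A`, where `A = H/α` is the `0`-block of `U`; as `H` is Hermitian, `A† A = (H/α)²`. -/

section BlockEncoding

variable {α σ : Type*} [Fintype α] [DecidableEq α] [Fintype σ]

open ContinuousLinearMap

lemma prjAt_comp_injAt (z : α) : prjAt (σ := σ) z ∘L injAt z = 1 := by
  ext v j
  simp [prjAt, injAt]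

lemma adjoint_injAt (z : α) : adjoint (injAt (σ := σ) z) = prjAt z := by
  refine ((eq_adjoint_iff _ _).2 fun w v => ?_).symm
  simp only [prjAt, injAt, LinearMap.coe_toContinuousLinearMap', LinearMap.coe_mk,
    AddHom.coe_mk, PiLp.inner_apply, RCLike.inner_apply, Fintype.sum_prod_type]
  rw [Finset.sum_eq_single z (fun a _ ha => by simp [ha]) (by simp)]
  simp

lemma blockAt_adjoint (z : α) (U : EuclideanSpace ℂ (α × σ) →L[ℂ] EuclideanSpace ℂ (α × σ)) :
    blockAt z (adjoint U) = adjoint (blockAt z U) := by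
  simp only [blockAt, adjoint_comp, ← adjoint_injAt, adjoint_adjoint, comp_assoc]

lemma blockAt_one (z : α) : blockAt (σ := σ) z 1 = 1 := by
  rw [blockAt, one_def, id_comp, prjAt_comp_injAt]

lemma blockAt_sub (z : α) (A B : EuclideanSpace ℂ (α × σ) →L[ℂ] EuclideanSpace ℂ (α × σ)) :
    blockAt z (A - B) = blockAt z A - blockAt z B := by
  simp only [blockAt, sub_comp, comp_sub]

lemma blockAt_smul (z : α) (c : ℂ)
    (A : EuclideanSpace ℂ (α × σ) →L[ℂ] EuclideanSpace ℂ (α × σ)) :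
    blockAt z (c • A) = c • blockAt z A := by
  simp only [blockAt, smul_comp, comp_smul]

lemma blockAt_comp_projector_comp (z : α)
    (A B : EuclideanSpace ℂ (α × σ) →L[ℂ] EuclideanSpace ℂ (α × σ)) :
    blockAt z (A ∘L (injAt z ∘L prjAt z) ∘L B) = blockAt z A ∘L blockAt z B := by
  simp only [blockAt, comp_assoc]

theorem blockAt_star_comp_reflection_comp (z : α)
    (U : EuclideanSpace ℂ (α × σ) →L[ℂ] EuclideanSpace ℂ (α × σ)) (hU : star U * U = 1) :
    blockAt z (star U ∘L ((2 : ℂ) • (injAt (σ := σ) z ∘L prjAt z) - 1) ∘L U)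
      = (2 : ℂ) • (star (blockAt z U) ∘L blockAt z U) - 1 := by
  have hexpand : star U ∘L ((2 : ℂ) • (injAt (σ := σ) z ∘L prjAt z) - 1) ∘L U
      = (2 : ℂ) • (star U ∘L (injAt z ∘L prjAt z) ∘L U) - 1 := by
    simp only [← mul_def, mul_sub, sub_mul, one_mul, mul_smul_comm, smul_mul_assoc]
    rw [hU]
  rw [hexpand, blockAt_sub, blockAt_smul, blockAt_one, blockAt_comp_projector_comp,
    star_eq_adjoint, star_eq_adjoint, blockAt_adjoint]

end BlockEncoding

theorem stmt_0_general (b n : ℕ)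
    (U : EuclideanSpace ℂ (Fin (2^b) × Fin (2^n)) →L[ℂ]
         EuclideanSpace ℂ (Fin (2^b) × Fin (2^n)))
    (hU : U ∈ unitary (EuclideanSpace ℂ (Fin (2^b) × Fin (2^n)) →L[ℂ]
         EuclideanSpace ℂ (Fin (2^b) × Fin (2^n))))
    (H : EuclideanSpace ℂ (Fin (2^n)) →L[ℂ] EuclideanSpace ℂ (Fin (2^n)))
    (hH : IsSelfAdjoint H) (α : ℝ)
    (z : Fin (2^b))
    (hblock : blockAt z U = α⁻¹ • H) :
    blockAt z (star U ∘L ((2 : ℂ) • (injAt (σ := Fin (2^n)) z ∘L prjAt z) - 1) ∘L U)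
      = (2 : ℂ) • ((α⁻¹ • H) ∘L (α⁻¹ • H)) - 1 := by
  have hselfAdjoint : IsSelfAdjoint (α⁻¹ • H) :=
    algebraMap_smul ℂ α⁻¹ H ▸ ((IsSelfAdjoint.all α⁻¹).algebraMap ℂ).smul hH
  rw [blockAt_star_comp_reflection_comp z U (Unitary.star_mul_self_of_mem hU), hblock,
    hselfAdjoint.star_eq]

/-- if U is a unitary block-encoding of H/α (H Hermitian, 0 < α, ‖H‖ ≤ α), then
U† (R₀⊗I) U is a (1,b,0)-block-encoding of 2(H/α)² − I, where R₀ = 2|0⟩⟨0| − I. -/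
theorem stmt_0 (b n : ℕ)
    (U : EuclideanSpace ℂ (Fin (2^b) × Fin (2^n)) →L[ℂ]
         EuclideanSpace ℂ (Fin (2^b) × Fin (2^n)))
    (hU : U ∈ unitary (EuclideanSpace ℂ (Fin (2^b) × Fin (2^n)) →L[ℂ]
         EuclideanSpace ℂ (Fin (2^b) × Fin (2^n))))
    (H : EuclideanSpace ℂ (Fin (2^n)) →L[ℂ] EuclideanSpace ℂ (Fin (2^n)))
    (hH : IsSelfAdjoint H) (α : ℝ) (hα : 0 < α) (hnorm : ‖H‖ ≤ α)
    (z : Fin (2^b)) (hz : (z : ℕ) = 0)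
    (hblock : blockAt z U = α⁻¹ • H) :
    blockAt z (star U ∘L ((2 : ℂ) • (injAt (σ := Fin (2^n)) z ∘L prjAt z) - 1) ∘L U)
      = (2 : ℂ) • ((α⁻¹ • H) ∘L (α⁻¹ • H)) - 1 :=
  stmt_0_general b n U hU H hH α z hblock
end

section
/- Let N' ≥ 2 and consider the state |φ⟩ = (1/√(N'(N'−1))) Σ_{i=0}^{N'-1} [ |i⟩ Σ_{j=0}^{min(2i−1, N'−2)} |j⟩ |0⟩ + |N'−1−i⟩ Σ_{j=min(N'−1, 2i)}^{N'-2} |j⟩ |1⟩ ] in ℂ^{N'} ⊗ ℂ^{N'-1} ⊗ ℂ². For each n with 0 ≤ n ≤ N'−1, the squared norm of the projection of |φ⟩ onto the subspace |n⟩⟨n| ⊗ I ⊗ I equals 2n/(N'(N'−1)). -/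
/-!
Only two summands of `φ` reach the slice `|n⟩⟨n| ⊗ I ⊗ I`: the first block of `i = n`, which
puts amplitude `c = 1/√(N'(N'-1))` on `|n⟩|j⟩|0⟩` for `j < 2n`, and the second block of
`i = N'-1-n`, which puts `c` on `|n⟩|j⟩|1⟩` for `2(N'-1-n) ≤ j`. With `j < N'-1` these are
`min(2n, N'-1)` and `max(0, 2n-(N'-1))` coordinates, `2n` in total.
-/

open Finset

theorem EuclideanSpace.sum_attach_single_apply {𝕜 ι σ : Type*} [RCLike 𝕜] [DecidableEq ι]
    [DecidableEq σ] {K : ℕ} (S : Finset ℕ) (f : S → Fin K) (hf : ∀ x, (f x : ℕ) = x)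
    (i : ι) (t : σ) (a : ι) (j : Fin K) (s : σ) :
    ∑ x ∈ S.attach, EuclideanSpace.single (i, f x, t) (1 : 𝕜) (a, j, s)
      = if a = i ∧ (j : ℕ) ∈ S ∧ s = t then 1 else 0 := by
  have hfj : ∀ x, (j = f x ↔ (j : ℕ) = x) := fun x => by rw [Fin.ext_iff, hf]
  simp only [PiLp.single_apply, Prod.mk.injEq, hfj]
  rw [Finset.sum_attach S (fun x => if a = i ∧ (j : ℕ) = x ∧ s = t then (1 : 𝕜) else 0)]
  simp [ite_and]

theorem Fin.mk_sub_one_sub_eq_rev {n : ℕ} (i : Fin n) (h : n - 1 - i < n) :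
    (⟨n - 1 - i, h⟩ : Fin n) = i.rev := by
  ext; simp only [val_rev]; omega

theorem EuclideanSpace.norm_sq_toLp_ite_fst {𝕜 ι κ : Type*} [RCLike 𝕜] [Fintype ι] [Fintype κ]
    [DecidableEq ι] (v : EuclideanSpace 𝕜 (ι × κ)) (a : ι) :
    ‖(WithLp.toLp 2 (fun p => if p.1 = a then v p else 0) : EuclideanSpace 𝕜 (ι × κ))‖ ^ 2
      = ∑ q, ‖v (a, q)‖ ^ 2 := by
  rw [EuclideanSpace.norm_sq_eq, Fintype.sum_prod_type]
  simp [apply_ite (‖·‖ ^ 2)]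

theorem Fin.card_filter_le_val {n : ℕ} (m : ℕ) : #{i : Fin n | m ≤ (i : ℕ)} = n - m := by
  have := card_filter_add_card_filter_not (s := univ) (fun i : Fin n => (i : ℕ) < m)
  simp only [not_lt, card_univ, Fintype.card_fin, Fin.card_filter_val_lt] at this
  omega

theorem Finset.sum_norm_sq_ite {α E : Type*} [SeminormedAddGroup E] (s : Finset α) (p : α → Prop)
    [DecidablePred p] (a : E) :
    ∑ x ∈ s, ‖if p x then a else 0‖ ^ 2 = #{x ∈ s | p x} * ‖a‖ ^ 2 := by
  simp [apply_ite (fun b : E => ‖b‖ ^ 2), sum_ite]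

/-- for the state φ = (1/√(N'(N'−1))) Σ_i [ |i⟩ Σ_{j=0}^{min(2i−1,N'−2)} |j⟩|0⟩
+ |N'−1−i⟩ Σ_{j=min(N'−1,2i)}^{N'−2} |j⟩|1⟩ ] in ℂ^{N'} ⊗ ℂ^{N'−1} ⊗ ℂ², the squared norm of
the projection onto |n⟩⟨n| ⊗ I ⊗ I equals 2n/(N'(N'−1)). -/
theorem stmt_6 (N' : ℕ)
    (φ : EuclideanSpace ℂ (Fin N' × Fin (N' - 1) × Fin 2))
    (hφ : φ = (1 / Real.sqrt ((N' : ℝ) * ((N' : ℝ) - 1))) •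
      ∑ i : Fin N',
        ((∑ j ∈ (Finset.range (min (2 * (i : ℕ)) (N' - 1))).attach,
            EuclideanSpace.single
              (i, (⟨(j : ℕ), by have := Finset.mem_range.mp j.2; omega⟩ : Fin (N' - 1)),
                (0 : Fin 2)) (1 : ℂ))
         + (∑ j ∈ (Finset.Ico (min (N' - 1) (2 * (i : ℕ))) (N' - 1)).attach,
            EuclideanSpace.single
              ((⟨N' - 1 - (i : ℕ), by omega⟩ : Fin N'),
                (⟨(j : ℕ), by have := (Finset.mem_Ico.mp j.2).2; omega⟩ : Fin (N' - 1)),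
                (1 : Fin 2)) (1 : ℂ)))) :
    ∀ n : Fin N',
      ‖(show EuclideanSpace ℂ (Fin N' × Fin (N' - 1) × Fin 2) from
          WithLp.toLp 2 (fun p => if p.1 = n then φ p else 0))‖ ^ 2
        = 2 * (n : ℝ) / ((N' : ℝ) * ((N' : ℝ) - 1)) := by
  intro n
  set c : ℝ := 1 / Real.sqrt ((N' : ℝ) * ((N' : ℝ) - 1))
  have hcoord : ∀ j s, φ (n, j, s) = c • ((if (j : ℕ) < 2 * n ∧ s = 0 then 1 else 0) +
      (if 2 * (N' - 1 - n) ≤ (j : ℕ) ∧ s = 1 then 1 else 0)) := by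
    intro j s
    subst hφ
    simp only [PiLp.smul_apply, WithLp.ofLp_sum, PiLp.add_apply, Fin.mk_sub_one_sub_eq_rev,
      Finset.sum_apply, EuclideanSpace.sum_attach_single_apply, implies_true, sum_add_distrib,
      ← Fin.rev_eq_iff, ite_and, sum_ite_eq, mem_univ, if_true, mem_range, mem_Ico, Fin.val_rev,
      if_pos j.isLt]
    have h0 : (j : ℕ) < min (2 * (n : ℕ)) (N' - 1) ↔ (j : ℕ) < 2 * n := by omega
    have h1 : min (N' - 1) (2 * (N' - ((n : ℕ) + 1))) ≤ j ↔ 2 * (N' - 1 - n) ≤ (j : ℕ) := by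
      omega
    simp only [h0, h1]
  have hc : c ^ 2 = 1 / ((N' : ℝ) * ((N' : ℝ) - 1)) := by
    have : (1 : ℝ) ≤ N' := by exact_mod_cast n.pos
    rw [div_pow, one_pow, Real.sq_sqrt (by nlinarith)]
  have hcount : #{j : Fin (N' - 1) | (j : ℕ) < 2 * n} +
      #{j : Fin (N' - 1) | 2 * (N' - 1 - n) ≤ (j : ℕ)} = 2 * (n : ℕ) := by
    rw [Fin.card_filter_val_lt, Fin.card_filter_le_val]
    omega
  rw [EuclideanSpace.norm_sq_toLp_ite_fst, Fintype.sum_prod_type]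
  simp only [Fin.sum_univ_two, hcoord, Fin.isValue, and_true, and_false, zero_ne_one, one_ne_zero,
    if_false, add_zero, zero_add, Complex.real_smul, mul_ite, mul_one, mul_zero, sum_add_distrib]
  rw [sum_norm_sq_ite, sum_norm_sq_ite, ← add_mul, ← Nat.cast_add, hcount, Complex.norm_real,
    Real.norm_eq_abs, sq_abs, hc]
  push_cast
  ring
end
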